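/- In any classical Cartan domain ℛ, every weak m-extremal map f : 𝔻 → ℛ (with respect to some m distinct points) is in fact m-extremal, i.e. it is weak m-extremal with respect to every choice of m distinct points in 𝔻. -/

import Mathlib

open Complex Metric Set

noncomputable section

/-- The open unit disc in `ℂ`. -/
def 𝔻 : Set ℂ := Metric.ball 0 1

/-- `B` is a Blaschke product of degree `m` on the unit disc: a unimodular constant
times a product of `m` Möbius factors. -/
def IsBlaschke (m : ℕ) (B : ℂ → ℂ) : Prop :=
  ∃ (ω : ℂ) (a : Fin m → ℂ), ‖ω‖ = 1 ∧ (∀ j, a j ∈ 𝔻) ∧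
    ∀ z ∈ 𝔻, B z = ω * ∏ j, (a j - z) / (1 - (starRingEnd ℂ) (a j) * z)

variable {E : Type*} [NormedAddCommGroup E] [NormedSpace ℂ E]

/-- The interpolation data `lam j ↦ f (lam j)` is extremally solvable (through `f`):
no map holomorphic on a neighbourhood of the closed unit disc with values in `D`
interpolates `f` at the points `lam j`. -/
def ExtSolv (D : Set E) {m : ℕ} (lam : Fin m → ℂ) (f : ℂ → E) : Prop :=
  ¬ ∃ (U : Set ℂ) (g : ℂ → E), IsOpen U ∧ Metric.closedBall (0 : ℂ) 1 ⊆ U ∧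
      DifferentiableOn ℂ g U ∧ (∀ z ∈ U, g z ∈ D) ∧ ∀ j, g (lam j) = f (lam j)

/-- `f : 𝔻 → D` is a weak `m`-extremal with respect to the distinct points `lam`. -/
def IsWeakExtremal (D : Set E) {m : ℕ} (lam : Fin m → ℂ) (f : ℂ → E) : Prop :=
  DifferentiableOn ℂ f 𝔻 ∧ (∀ z ∈ 𝔻, f z ∈ D) ∧ ExtSolv D lam f

/-- `f : 𝔻 → D` is `m`-extremal: for all choices of `m` distinct points of `𝔻` the
corresponding interpolation data is extremally solvable. -/
def IsMExtremal (D : Set E) (m : ℕ) (f : ℂ → E) : Prop :=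
  DifferentiableOn ℂ f 𝔻 ∧ (∀ z ∈ 𝔻, f z ∈ D) ∧
    ∀ lam : Fin m → ℂ, Function.Injective lam → (∀ j, lam j ∈ 𝔻) → ExtSolv D lam f

/-- The Minkowski functional of a set `D`. -/
def mink (D : Set E) (z : E) : ℝ := sInf {t : ℝ | 0 < t ∧ ((t : ℂ))⁻¹ • z ∈ D}

/-- `φ` is a holomorphic automorphism of `D`. -/
def IsAutomorphismOf (D : Set E) (φ : E → E) : Prop :=
  DifferentiableOn ℂ φ D ∧ Set.MapsTo φ D D ∧
    ∃ ψ : E → E, DifferentiableOn ℂ ψ D ∧ Set.MapsTo ψ D D ∧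
      (∀ z ∈ D, ψ (φ z) = z) ∧ (∀ z ∈ D, φ (ψ z) = z)

/-- The group of holomorphic automorphisms of `D` acts transitively. -/
def Homogeneous (D : Set E) : Prop :=
  ∀ z ∈ D, ∀ w ∈ D, ∃ φ : E → E, IsAutomorphismOf D φ ∧ φ z = w

/-- `f` is an `m`-complex geodesic of `D`: there is `F ∈ 𝒪(D, 𝔻)` such that `F ∘ f` is a
non-constant Blaschke product of degree at most `m - 1`. -/
def IsComplexGeodesicOfOrder (D : Set E) (m : ℕ) (f : ℂ → E) : Prop :=
  DifferentiableOn ℂ f 𝔻 ∧ (∀ z ∈ 𝔻, f z ∈ D) ∧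
    ∃ F : E → ℂ, DifferentiableOn ℂ F D ∧ (∀ z ∈ D, F z ∈ 𝔻) ∧
      ∃ k : ℕ, 1 ≤ k ∧ k ≤ m - 1 ∧ ∃ B : ℂ → ℂ, IsBlaschke k B ∧
        ∀ z ∈ 𝔻, F (f z) = B z

/-- The sub-mean-value property on circles, for a real function on a subset of `ℂ`. -/
def SubmeanOn (u : ℂ → ℝ) (S : Set ℂ) : Prop :=
  ∀ (c : ℂ) (r : ℝ), 0 < r → Metric.closedBall c r ⊆ S →
    u c ≤ (2 * Real.pi)⁻¹ * ∫ θ in (0:ℝ)..(2 * Real.pi), u (c + r * Complex.exp (θ * Complex.I))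

/-- `u` is plurisubharmonic on `D`: upper semicontinuous and submean on every complex line. -/
def PlurisubharmonicOn (u : E → ℝ) (D : Set E) : Prop :=
  UpperSemicontinuousOn u D ∧
    ∀ (z v : E), SubmeanOn (fun w : ℂ => u (z + w • v)) {w : ℂ | z + w • v ∈ D}

/-- Hartogs pseudoconvexity: `- log dist(·, ∂D)` is plurisubharmonic on `D`. -/
def IsPseudoconvex (D : Set E) : Prop :=
  PlurisubharmonicOn (fun z => - Real.log (Metric.infDist z Dᶜ)) D


/-!
Move a node `α` of `lam` to `0` by the disc involution `mobius α` and `f α` to `0` by an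
automorphism of `R`; then `f z = z • H z` with `H = dslope f 0`. Multiplying by `z` keeps an
interpolant inside the balanced domain `R`, and dividing an interpolant vanishing at `0` by `z`
keeps it inside `R` by the Schwarz lemma for convex balanced domains (applied on a disc of radius
`> 1`). Hence, once `H` maps `𝔻` into `R`, the problem for `f` at `0, lam'` is the problem for
`H` at `lam'` with one node fewer, and induction applies. If instead `H` leaves `R` at one point,
a separating functional and the maximum principle show that it leaves `R` at every point of `𝔻`,
which an interpolant at `0` and any second node forbids. Two arbitrary node tuples are linked by a
third one sharing a node with each.
-/

open Function ComplexConjugate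

def mobius (α z : ℂ) : ℂ := (α - z) / (1 - conj α * z)

section Mobius

variable {α z : ℂ}

theorem mobius_denom_ne_zero (hα : ‖α‖ < 1) (hz : ‖z‖ ≤ 1) : 1 - conj α * z ≠ 0 := by
  intro h
  have h1 : ‖conj α * z‖ = 1 := by rw [← norm_one (α := ℂ), ← sub_eq_zero.1 h]
  rw [norm_mul, RCLike.norm_conj] at h1
  nlinarith [norm_nonneg z, norm_nonneg α]

theorem normSq_mobius_denom_sub_normSq_num (α z : ℂ) :
    normSq (1 - conj α * z) - normSq (α - z) = (1 - normSq α) * (1 - normSq z) := by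
  simp only [normSq_apply, sub_re, sub_im, one_re, one_im, mul_re, mul_im, conj_re, conj_im]
  ring

theorem norm_mobius_le (hα : ‖α‖ < 1) (hz : ‖z‖ ≤ 1) : ‖mobius α z‖ ≤ 1 := by
  rw [mobius, norm_div, div_le_one (norm_pos_iff.2 (mobius_denom_ne_zero hα hz)),
    ← sq_le_sq₀ (norm_nonneg _) (norm_nonneg _), ← normSq_eq_norm_sq, ← normSq_eq_norm_sq]
  have := normSq_mobius_denom_sub_normSq_num α z
  rw [normSq_eq_norm_sq α, normSq_eq_norm_sq z] at this
  nlinarith [mul_nonneg (sub_nonneg.2 (pow_le_one₀ (n := 2) (norm_nonneg α) hα.le))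
    (sub_nonneg.2 (pow_le_one₀ (n := 2) (norm_nonneg z) hz))]

theorem norm_mobius_lt (hα : ‖α‖ < 1) (hz : ‖z‖ < 1) : ‖mobius α z‖ < 1 := by
  rw [mobius, norm_div, div_lt_one (norm_pos_iff.2 (mobius_denom_ne_zero hα hz.le)),
    ← sq_lt_sq₀ (norm_nonneg _) (norm_nonneg _), ← normSq_eq_norm_sq, ← normSq_eq_norm_sq]
  have := normSq_mobius_denom_sub_normSq_num α z
  rw [normSq_eq_norm_sq α, normSq_eq_norm_sq z] at this
  nlinarith [norm_nonneg α, norm_nonneg z, mul_pos (sub_pos.2 hα) (sub_pos.2 hz)]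

@[simp]
theorem mobius_zero (α : ℂ) : mobius α 0 = α := by simp [mobius]

@[simp]
theorem mobius_self (α : ℂ) : mobius α α = 0 := by simp [mobius]

theorem mobius_mobius (hα : ‖α‖ < 1) (hz : ‖z‖ ≤ 1) : mobius α (mobius α z) = z := by
  have hd := mobius_denom_ne_zero hα hz
  have hden : 1 - conj α * mobius α z = (1 - conj α * α) / (1 - conj α * z) := by
    rw [mobius, eq_div_iff hd, sub_mul, mul_assoc, div_mul_cancel₀ _ hd]
    ring
  rw [mobius, hden, div_eq_iff (div_ne_zero (mobius_denom_ne_zero hα hα.le) hd), mobius,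
    mul_div_assoc', eq_div_iff hd, sub_mul, div_mul_cancel₀ _ hd]
  ring

theorem differentiableOn_mobius (α : ℂ) :
    DifferentiableOn ℂ (mobius α) {z | 1 - conj α * z ≠ 0} :=
  ((differentiableOn_const α).sub differentiableOn_id).div
    ((differentiableOn_const 1).sub ((differentiableOn_const _).mul differentiableOn_id))
    fun _ hz => hz

theorem mobius_mem_disc (hα : α ∈ 𝔻) (hz : z ∈ 𝔻) : mobius α z ∈ 𝔻 :=
  mem_ball_zero_iff.2 (norm_mobius_lt (mem_ball_zero_iff.1 hα) (mem_ball_zero_iff.1 hz))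

theorem differentiableOn_mobius_disc (hα : α ∈ 𝔻) : DifferentiableOn ℂ (mobius α) 𝔻 :=
  (differentiableOn_mobius α).mono fun _ hz =>
    mobius_denom_ne_zero (mem_ball_zero_iff.1 hα) (mem_ball_zero_iff.1 hz).le

theorem mobius_injOn (hα : α ∈ 𝔻) : InjOn (mobius α) 𝔻 := fun z hz w hw h => by
  have hα' := mem_ball_zero_iff.1 hα
  rw [← mobius_mobius hα' (mem_ball_zero_iff.1 hz).le, h,
    mobius_mobius hα' (mem_ball_zero_iff.1 hw).le]

end Mobius

def PickSolvable (D : Set E) {m : ℕ} (lam : Fin m → ℂ) (f : ℂ → E) : Prop :=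
  ∃ (U : Set ℂ) (g : ℂ → E), IsOpen U ∧ Metric.closedBall (0 : ℂ) 1 ⊆ U ∧
      DifferentiableOn ℂ g U ∧ (∀ z ∈ U, g z ∈ D) ∧ ∀ j, g (lam j) = f (lam j)

theorem extSolv_iff_not_pickSolvable {D : Set E} {m : ℕ} {lam : Fin m → ℂ} {f : ℂ → E} :
    ExtSolv D lam f ↔ ¬ PickSolvable D lam f :=
  Iff.rfl

namespace PickSolvable

variable {D : Set E} {m : ℕ} {lam : Fin m → ℂ} {f : ℂ → E}

theorem mem (h : PickSolvable D lam f) {j : Fin m} (hj : lam j ∈ 𝔻) : f (lam j) ∈ D := by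
  obtain ⟨U, g, -, hU, -, hgD, hg⟩ := h
  exact hg j ▸ hgD _ (hU (ball_subset_closedBall hj))

theorem congr {f' : ℂ → E} (h : PickSolvable D lam f) (hf : ∀ j, f (lam j) = f' (lam j)) :
    PickSolvable D lam f' := by
  obtain ⟨U, g, hUo, hU, hg, hgD, hgf⟩ := h
  exact ⟨U, g, hUo, hU, hg, hgD, fun j => (hgf j).trans (hf j)⟩

theorem comp_nodes {k : ℕ} (h : PickSolvable D lam f) (e : Fin k → Fin m) :
    PickSolvable D (lam ∘ e) f := by
  obtain ⟨U, g, hUo, hU, hg, hgD, hgf⟩ := h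
  exact ⟨U, g, hUo, hU, hg, hgD, fun j => hgf (e j)⟩

theorem comp_left {Φ : E → E} (hΦ : DifferentiableOn ℂ Φ D) (hΦD : MapsTo Φ D D)
    (h : PickSolvable D lam f) : PickSolvable D lam (Φ ∘ f) := by
  obtain ⟨U, g, hUo, hU, hg, hgD, hgf⟩ := h
  exact ⟨U, Φ ∘ g, hUo, hU, hΦ.comp hg hgD, fun z hz => hΦD (hgD z hz),
    fun j => congrArg Φ (hgf j)⟩

theorem comp_mobius {α : ℂ} (hα : ‖α‖ < 1) (hlam : ∀ j, ‖lam j‖ ≤ 1)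
    (h : PickSolvable D lam f) : PickSolvable D (mobius α ∘ lam) (f ∘ mobius α) := by
  obtain ⟨U, g, hUo, hU, hg, hgD, hgf⟩ := h
  refine ⟨{z | 1 - conj α * z ≠ 0} ∩ mobius α ⁻¹' U, g ∘ mobius α,
    (differentiableOn_mobius α).continuousOn.isOpen_inter_preimage
      (isOpen_ne_fun (by fun_prop) (by fun_prop)) hUo,
    fun z hz => ?_, hg.comp ((differentiableOn_mobius α).mono inter_subset_left)
      fun z hz => hz.2, fun z hz => hgD _ hz.2, fun j => ?_⟩
  · have hz := mem_closedBall_zero_iff.1 hz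
    exact ⟨mobius_denom_ne_zero hα hz, hU (mem_closedBall_zero_iff.2 (norm_mobius_le hα hz))⟩
  · simp only [comp_apply, mobius_mobius hα (hlam j), hgf j]

theorem cons_zero_smul (hD : IsOpen D) (hbal : Balanced ℂ D) (h : PickSolvable D lam f) :
    PickSolvable D (Fin.cons 0 lam : Fin (m + 1) → ℂ) (fun z => z • f z) := by
  obtain ⟨U, g, hUo, hU, hg, hgD, hgf⟩ := h
  have hg' : DifferentiableOn ℂ (fun z => z • g z) U := differentiableOn_id.smul hg
  refine ⟨U ∩ (fun z => z • g z) ⁻¹' D, fun z => z • g z,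
    hg'.continuousOn.isOpen_inter_preimage hUo hD,
    fun z hz => ⟨hU hz, hbal.smul_mem (mem_closedBall_zero_iff.1 hz) (hgD z (hU hz))⟩,
    hg'.mono inter_subset_left, fun z hz => hz.2, Fin.cases (by simp) fun j => by simp [hgf j]⟩

end PickSolvable

theorem pickSolvable_comp_perm_iff {D : Set E} {m : ℕ} {lam : Fin m → ℂ} {f : ℂ → E}
    (σ : Equiv.Perm (Fin m)) : PickSolvable D (lam ∘ σ) f ↔ PickSolvable D lam f :=
  ⟨fun h => by simpa [comp_assoc] using h.comp_nodes σ.symm, fun h => h.comp_nodes σ⟩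

theorem ExtSolv.two_le {D : Set E} {m : ℕ} {lam : Fin m → ℂ} {f : ℂ → E} (h : ExtSolv D lam f)
    (hlam : ∀ j, lam j ∈ 𝔻) (hf : ∀ z ∈ 𝔻, f z ∈ D) : 2 ≤ m := by
  by_contra! hm
  obtain ⟨z₀, hz₀, hlam₀⟩ : ∃ z₀ ∈ 𝔻, ∀ j, lam j = z₀ := by
    interval_cases m
    · exact ⟨0, mem_ball_self one_pos, fun j => j.elim0⟩
    · exact ⟨lam 0, hlam 0, fun j => by rw [Subsingleton.elim j 0]⟩
  exact h ⟨univ, fun _ => f z₀, isOpen_univ, subset_univ _, differentiableOn_const _,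
    fun _ _ => hf z₀ hz₀, fun j => by rw [hlam₀]⟩

theorem exists_one_lt_ball_subset {U : Set ℂ} (hU : IsOpen U) (h : closedBall (0 : ℂ) 1 ⊆ U) :
    ∃ r, 1 < r ∧ ball (0 : ℂ) r ⊆ U := by
  obtain ⟨δ, hδ, hδU⟩ := (isCompact_closedBall (0 : ℂ) 1).exists_thickening_subset_open hU h
  exact ⟨δ + 1, by linarith, by rwa [← thickening_closedBall hδ zero_le_one]⟩

theorem exists_dual_norm_lt_one_of_notMem {D : Set E} (hD : IsOpen D) (hconv : Convex ℝ D)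
    (hbal : Balanced ℂ D) (h0 : (0 : E) ∈ D) {x : E} (hx : x ∉ D) :
    ∃ L : StrongDual ℂ E, (∀ y ∈ D, ‖L y‖ < 1) ∧ 1 ≤ ‖L x‖ := by
  obtain ⟨L, hLx, hL⟩ := RCLike.separate_convex_open_set (𝕜 := ℂ) h0 hconv hD hx
  refine ⟨L, fun y hy => ?_, hLx ▸ re_le_norm _⟩
  rcases eq_or_ne (L y) 0 with hy0 | hy0
  · simp [hy0]
  -- rotating `y` inside `D` makes `L y` real and positive
  set c : ℂ := conj (L y) / ‖L y‖
  have hc : ‖c‖ = 1 := by simp [c, hy0]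
  have hLc : L (c • y) = ‖L y‖ := by
    rw [map_smul, smul_eq_mul, div_mul_eq_mul_div, conj_mul', sq,
      mul_div_cancel_right₀ _ (ofReal_ne_zero.2 (norm_ne_zero_iff.2 hy0))]
  simpa [hLc] using hL _ (hbal.smul_mem hc.le hy)

theorem norm_dual_dslope_le {D : Set E} {L : StrongDual ℂ E} (hL : ∀ y ∈ D, ‖L y‖ < 1)
    {g : ℂ → E} {r : ℝ} (hg : DifferentiableOn ℂ g (ball 0 r)) (hgD : ∀ z ∈ ball (0 : ℂ) r, g z ∈ D)
    (hg0 : g 0 = 0) {z : ℂ} (hz : z ∈ ball (0 : ℂ) r) : ‖L (dslope g 0 z)‖ ≤ 1 / r := by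
  have h0 : (0 : ℂ) ∈ ball (0 : ℂ) r := mem_ball_self (pos_of_mem_ball hz)
  rw [← L.dslope_comp g 0 z fun _ => hg.differentiableAt (isOpen_ball.mem_nhds h0)]
  refine Complex.norm_dslope_le_div_of_mapsTo_ball (L.differentiable.comp_differentiableOn hg)
    (fun w hw => ?_) hz
  rw [mem_closedBall, comp_apply, comp_apply, hg0, map_zero, dist_zero_right]
  exact (hL _ (hgD w hw)).le

theorem dslope_mem_of_one_lt {D : Set E} (hD : IsOpen D) (hconv : Convex ℝ D)
    (hbal : Balanced ℂ D) {g : ℂ → E} {r : ℝ} (hr : 1 < r) (hg : DifferentiableOn ℂ g (ball 0 r))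
    (hgD : ∀ z ∈ ball (0 : ℂ) r, g z ∈ D) (hg0 : g 0 = 0) {z : ℂ} (hz : z ∈ ball (0 : ℂ) r) :
    dslope g 0 z ∈ D := by
  by_contra hzD
  obtain ⟨L, hL, hLz⟩ :=
    exists_dual_norm_lt_one_of_notMem hD hconv hbal (hg0 ▸ hgD 0 (mem_ball_self (by linarith))) hzD
  have h1 := norm_dual_dslope_le hL hg hgD hg0 hz
  have h2 : 1 / r < 1 := (div_lt_one (by linarith)).2 hr
  linarith

theorem dslope_mem_or_forall_notMem [CompleteSpace E] {D : Set E} (hD : IsOpen D)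
    (hconv : Convex ℝ D) (hbal : Balanced ℂ D) {F : ℂ → E} (hF : DifferentiableOn ℂ F 𝔻)
    (hFD : ∀ z ∈ 𝔻, F z ∈ D) (hF0 : F 0 = 0) :
    (∀ z ∈ 𝔻, dslope F 0 z ∈ D) ∨ ∀ z ∈ 𝔻, dslope F 0 z ∉ D := by
  refine or_iff_not_imp_left.2 fun h => ?_
  obtain ⟨σ, hσ, hσD⟩ := not_forall₂.1 h
  have h0 : (0 : ℂ) ∈ 𝔻 := mem_ball_self one_pos
  obtain ⟨L, hL, hLσ⟩ := exists_dual_norm_lt_one_of_notMem hD hconv hbal (hF0 ▸ hFD 0 h0) hσD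
  have hbound : ∀ z ∈ 𝔻, ‖L (dslope F 0 z)‖ ≤ 1 := fun z hz => by
    simpa using norm_dual_dslope_le hL hF hFD hF0 hz
  -- maximum principle: `L ∘ dslope F 0` attains its bound `1` at `σ`
  have hconst := Complex.norm_eqOn_of_isPreconnected_of_isMaxOn (convex_ball 0 1).isPreconnected
    isOpen_ball (L.differentiable.comp_differentiableOn
      ((Complex.differentiableOn_dslope (isOpen_ball.mem_nhds h0)).2 hF))
    hσ fun z hz => (hbound z hz).trans hLσ
  intro z hz hzD
  have : ‖L (dslope F 0 z)‖ = ‖L (dslope F 0 σ)‖ := hconst hz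
  linarith [hL _ hzD]

theorem PickSolvable.dslope_of_cons_zero [CompleteSpace E] {D : Set E} (hD : IsOpen D)
    (hconv : Convex ℝ D) (hbal : Balanced ℂ D) {m : ℕ} {lam : Fin m → ℂ} {f : ℂ → E}
    (h : PickSolvable D (Fin.cons 0 lam : Fin (m + 1) → ℂ) f) (hf0 : f 0 = 0)
    (hlam : ∀ j, lam j ≠ 0) : PickSolvable D lam (dslope f 0) := by
  obtain ⟨U, g, hUo, hU, hg, hgD, hgf⟩ := h
  obtain ⟨r, hr, hrU⟩ := exists_one_lt_ball_subset hUo hU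
  have hg0 : g 0 = 0 := by simpa [hf0] using hgf 0
  have hgr := hg.mono hrU
  refine ⟨ball 0 r, dslope g 0, isOpen_ball, closedBall_subset_ball hr,
    (Complex.differentiableOn_dslope (isOpen_ball.mem_nhds (mem_ball_self (by linarith)))).2 hgr,
    fun z hz => dslope_mem_of_one_lt hD hconv hbal hr hgr (fun w hw => hgD w (hrU hw)) hg0 hz,
    fun j => ?_⟩
  have hgj := hgf j.succ
  simp only [Fin.cons_succ] at hgj
  rw [dslope_of_ne _ (hlam j), dslope_of_ne _ (hlam j), slope_def_module, slope_def_module, hgj,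
    hg0, hf0]

theorem pickSolvable_mobius_iff {D : Set E} {m : ℕ} {lam : Fin m → ℂ} {f : ℂ → E} {Φ : E → E}
    (hΦ : IsAutomorphismOf D Φ) {α : ℂ} (hα : α ∈ 𝔻) (hlam : ∀ j, lam j ∈ 𝔻)
    (hf : ∀ z ∈ 𝔻, f z ∈ D) :
    PickSolvable D (mobius α ∘ lam) (Φ ∘ f ∘ mobius α) ↔ PickSolvable D lam f := by
  obtain ⟨hΦd, hΦD, Ψ, hΨd, hΨD, hΨΦ, -⟩ := hΦ
  have hα' := mem_ball_zero_iff.1 hα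
  have hlam' j : ‖lam j‖ ≤ 1 := (mem_ball_zero_iff.1 (hlam j)).le
  refine ⟨fun h => ?_, fun h => (h.comp_mobius hα' hlam').comp_left hΦd hΦD⟩
  have h' := (h.comp_mobius hα' fun j => norm_mobius_le hα' (hlam' j)).comp_left hΨd hΨD
  simp only [comp_def, mobius_mobius hα' (hlam' _)] at h'
  exact h'.congr fun j => by simp [mobius_mobius hα' (hlam' j), hΨΦ _ (hf _ (hlam j))]

def WeakExtremalImpliesMExtremal (D : Set E) (m : ℕ) : Prop :=
  ∀ (f : ℂ → E) (lam : Fin m → ℂ), (∀ j, lam j ∈ 𝔻) → IsWeakExtremal D lam f → IsMExtremal D m f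

section Induction

variable [CompleteSpace E] {D : Set E} {m : ℕ}

theorem extSolv_of_extSolv_of_map_zero (hD : IsOpen D) (hconv : Convex ℝ D)
    (hbal : Balanced ℂ D) (ih : WeakExtremalImpliesMExtremal D m)
    {F : ℂ → E} (hF : DifferentiableOn ℂ F 𝔻) (hFD : ∀ z ∈ 𝔻, F z ∈ D) (hF0 : F 0 = 0)
    {lam xi : Fin (m + 1) → ℂ} (hlam : ∀ j, lam j ∈ 𝔻) (hlam0 : lam 0 = 0)
    (hFe : ExtSolv D lam F) (hxi : Injective xi) (hxiD : ∀ j, xi j ∈ 𝔻) (hxi0 : xi 0 = 0) :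
    ExtSolv D xi F := by
  have hm := hFe.two_le hlam hFD
  have h0 : (0 : ℂ) ∈ 𝔻 := mem_ball_self one_pos
  rw [extSolv_iff_not_pickSolvable] at hFe ⊢
  intro hS
  rw [← Fin.cons_self_tail lam, hlam0] at hFe
  rw [← Fin.cons_self_tail xi, hxi0] at hS hxi
  obtain ⟨hxi_ne, -⟩ := Fin.cons_injective_iff.1 hxi
  have hH : PickSolvable D (Fin.tail xi) (dslope F 0) :=
    hS.dslope_of_cons_zero hD hconv hbal hF0 fun j h => hxi_ne ⟨j, h⟩
  have hHD : ∀ z ∈ 𝔻, dslope F 0 z ∈ D :=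
    (dslope_mem_or_forall_notMem hD hconv hbal hF hFD hF0).resolve_right fun h =>
      h _ (hxiD _) (hH.mem (j := ⟨0, by omega⟩) (hxiD _))
  have hFH : ∀ z, z • dslope F 0 z = F z := fun z => by simpa [hF0] using sub_smul_dslope F 0 z
  have hHe : IsWeakExtremal D (Fin.tail lam) (dslope F 0) :=
    ⟨(Complex.differentiableOn_dslope (isOpen_ball.mem_nhds h0)).2 hF, hHD,
      extSolv_iff_not_pickSolvable.2 fun h =>
        hFe ((h.cons_zero_smul hD hbal).congr fun j => hFH _)⟩
  exact (ih _ _ (fun j => hlam _) hHe).2.2 _ (Fin.cons_injective_iff.1 hxi).2 (fun j => hxiD _) hH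

theorem extSolv_of_extSolv_of_eq_apply_zero (hD : IsOpen D) (hconv : Convex ℝ D)
    (hbal : Balanced ℂ D) (hhom : Homogeneous D) (ih : WeakExtremalImpliesMExtremal D m)
    {f : ℂ → E} {lam mu : Fin (m + 1) → ℂ} (hlam : ∀ j, lam j ∈ 𝔻) (hf : IsWeakExtremal D lam f)
    (hmu : Injective mu) (hmuD : ∀ j, mu j ∈ 𝔻) (hmu0 : mu 0 = lam 0) : ExtSolv D mu f := by
  obtain ⟨hfd, hfD, hfe⟩ := hf
  set α := lam 0
  have hα : α ∈ 𝔻 := hlam 0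
  have hfα : f α ∈ D := hfD α hα
  obtain ⟨Φ, hΦ, hΦα⟩ := hhom (f α) hfα 0 (hbal.zero_mem ⟨_, hfα⟩)
  have hmobD : ∀ z ∈ 𝔻, mobius α z ∈ 𝔻 := fun z hz => mobius_mem_disc hα hz
  rw [extSolv_iff_not_pickSolvable, ← pickSolvable_mobius_iff hΦ hα hlam hfD] at hfe
  rw [extSolv_iff_not_pickSolvable, ← pickSolvable_mobius_iff hΦ hα hmuD hfD]
  exact extSolv_of_extSolv_of_map_zero hD hconv hbal ih
    (hΦ.1.comp (hfd.comp (differentiableOn_mobius_disc hα) hmobD) fun z hz => hfD _ (hmobD z hz))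
    (fun z hz => hΦ.2.1 (hfD _ (hmobD z hz))) (by simpa using hΦα)
    (fun j => hmobD _ (hlam j)) (by simp [α]) hfe
    (fun a b hab => hmu (mobius_injOn hα (hmuD a) (hmuD b) hab))
    (fun j => hmobD _ (hmuD j)) (by simp [hmu0, α])

theorem extSolv_of_extSolv_of_apply_eq (hD : IsOpen D) (hconv : Convex ℝ D)
    (hbal : Balanced ℂ D) (hhom : Homogeneous D) (ih : WeakExtremalImpliesMExtremal D m)
    {f : ℂ → E} {lam mu : Fin (m + 1) → ℂ} (hlam : ∀ j, lam j ∈ 𝔻) (hf : IsWeakExtremal D lam f)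
    (hmu : Injective mu) (hmuD : ∀ j, mu j ∈ 𝔻) {i j : Fin (m + 1)} (hij : mu j = lam i) :
    ExtSolv D mu f := by
  have h := extSolv_of_extSolv_of_eq_apply_zero hD hconv hbal hhom ih
    (lam := lam ∘ Equiv.swap 0 i) (mu := mu ∘ Equiv.swap 0 j) (fun k => hlam _)
    ⟨hf.1, hf.2.1, by rw [extSolv_iff_not_pickSolvable, pickSolvable_comp_perm_iff]; exact hf.2.2⟩
    (hmu.comp (Equiv.swap 0 j).injective) (fun k => hmuD _) (by simpa using hij)
  rwa [extSolv_iff_not_pickSolvable, pickSolvable_comp_perm_iff] at h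

theorem weakExtremalImpliesMExtremal_succ (hD : IsOpen D) (hconv : Convex ℝ D)
    (hbal : Balanced ℂ D) (hhom : Homogeneous D) (ih : WeakExtremalImpliesMExtremal D m) :
    WeakExtremalImpliesMExtremal D (m + 1) := by
  intro f lam hlam hf
  refine ⟨hf.1, hf.2.1, fun mu hmu hmuD => ?_⟩
  have hm := hf.2.2.two_le hlam hf.2.1
  by_cases hmu0 : lam 0 ∈ range mu
  · obtain ⟨j, hj⟩ := hmu0
    exact extSolv_of_extSolv_of_apply_eq hD hconv hbal hhom ih hlam hf hmu hmuD hj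
  -- otherwise pass through `lam 0, mu 1, …, mu m`, which shares a node with both
  set nu : Fin (m + 1) → ℂ := Fin.cons (lam 0) (Fin.tail mu)
  have hnu : Injective nu := Fin.cons_injective_of_injective
    (fun ⟨k, hk⟩ => hmu0 ⟨k.succ, hk⟩) (hmu.comp (Fin.succ_injective _))
  have hnuD : ∀ j, nu j ∈ 𝔻 := Fin.cases (hlam 0) fun j => hmuD _
  have hnue : ExtSolv D nu f :=
    extSolv_of_extSolv_of_apply_eq hD hconv hbal hhom ih hlam hf hnu hnuD (i := 0) (j := 0) rfl
  exact extSolv_of_extSolv_of_apply_eq hD hconv hbal hhom ih hnuD ⟨hf.1, hf.2.1, hnue⟩ hmu hmuD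
    (i := Fin.succ ⟨0, by omega⟩) (j := Fin.succ ⟨0, by omega⟩) rfl

theorem weakExtremalImpliesMExtremal (hD : IsOpen D) (hconv : Convex ℝ D) (hbal : Balanced ℂ D)
    (hhom : Homogeneous D) : WeakExtremalImpliesMExtremal D m := by
  induction m with
  | zero => exact fun f lam hlam hf => absurd (hf.2.2.two_le hlam hf.2.1) (by norm_num)
  | succ m ih => exact weakExtremalImpliesMExtremal_succ hD hconv hbal hhom ih

end Induction

theorem stmt6_general {n : ℕ} (R : Set (Fin n → ℂ)) (hRo : IsOpen R)
    (hconv : Convex ℝ R) (hbal : Balanced ℂ R)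
    (hhom : Homogeneous R)
    (m : ℕ) (f : ℂ → Fin n → ℂ)
    (lam : Fin m → ℂ) (hmem : ∀ j, lam j ∈ 𝔻)
    (hf : IsWeakExtremal R lam f) :
    IsMExtremal R m f :=
  weakExtremalImpliesMExtremal hRo hconv hbal hhom f lam hmem hf

theorem stmt6 {n : ℕ} (R : Set (Fin n → ℂ)) (hRo : IsOpen R) (hRc : IsConnected R)
    (hbd : Bornology.IsBounded R) (hconv : Convex ℝ R) (hbal : Balanced ℂ R)
    (hhom : Homogeneous R)
    (m : ℕ) (hm : 2 ≤ m) (f : ℂ → Fin n → ℂ)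
    (lam : Fin m → ℂ) (hinj : Function.Injective lam) (hmem : ∀ j, lam j ∈ 𝔻)
    (hf : IsWeakExtremal R lam f) :
    IsMExtremal R m f :=
  stmt6_general R hRo hconv hbal hhom m f lam hmem hf

end
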